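/- There exists a unique d̄ ∈ [1/2, 1] such that r(d̄) = 1, where r(d) = √(6d + 10)/√(−1 − 3d + √(1 + 222d + 225d²)); namely d̄ = 5/6. In particular r(5/6) = 1. -/
import Mathlib


noncomputable section

/-- The frequency ratio `r(d) = √(6d + 10)/√(−1 − 3d + √(1 + 222d + 225d²))` at the
equilibrium `L₁` of the spatial Hill four-body problem. -/
def rfun (d : ℝ) : ℝ :=
  Real.sqrt (6*d + 10) / Real.sqrt (-1 - 3*d + Real.sqrt (1 + 222*d + 225*d^2))

lemma rfun_at : rfun (5/6) = 1 := by
  unfold rfun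
  have h1 : (1 + 222*(5/6 : ℝ) + 225*(5/6)^2) = (37/2)^2 := by norm_num
  rw [h1, Real.sqrt_sq (by norm_num)]
  have h2 : (-1 - 3*(5/6 : ℝ) + 37/2) = 6*(5/6) + 10 := by norm_num
  rw [h2, div_self]
  positivity

lemma rfun_uniq (d : ℝ) (hd : d ∈ Set.Icc (1/2 : ℝ) 1) (h : rfun d = 1) : d = 5/6 := by
  obtain ⟨hd1, hd2⟩ := hd
  unfold rfun at h
  set E := Real.sqrt (1 + 222*d + 225*d^2) with hE
  have hb : Real.sqrt (-1 - 3*d + E) ≠ 0 := by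
    intro h0; rw [h0, div_zero] at h; norm_num at h
  have hbpos : 0 < -1 - 3*d + E := by
    by_contra hle
    exact hb (Real.sqrt_eq_zero'.mpr (not_lt.mp hle))
  have heq : Real.sqrt (6*d + 10) = Real.sqrt (-1 - 3*d + E) :=
    (div_eq_one_iff_eq hb).mp h
  have hab : 6*d + 10 = -1 - 3*d + E :=
    (Real.sqrt_inj (by linarith) hbpos.le).mp heq
  have hEval : E = 9*d + 11 := by linarith
  have hEsq : (1 + 222*d + 225*d^2) = (9*d + 11)^2 := by
    have h0 : (0:ℝ) ≤ 1 + 222*d + 225*d^2 := by nlinarith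
    have := Real.sq_sqrt h0
    rw [← hE, hEval] at this
    linarith [this]
  have hz : (6*d - 5) * (24*(d + 1)) = 0 := by nlinarith
  rcases mul_eq_zero.mp hz with h1 | h1
  · linarith
  · linarith

/-- There exists a unique `d̄ ∈ [1/2, 1]` with `r(d̄) = 1`, namely `d̄ = 5/6`; in particular
`r(5/6) = 1`. -/
theorem rfun_eq_one_iff :
    (∃! d : ℝ, d ∈ Set.Icc (1/2 : ℝ) 1 ∧ rfun d = 1) ∧
    rfun (5/6) = 1 ∧
    (∀ d ∈ Set.Icc (1/2 : ℝ) 1, rfun d = 1 → d = 5/6) := by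
  refine ⟨⟨5/6, ⟨⟨by norm_num, by norm_num⟩, rfun_at⟩, ?_⟩, rfun_at, fun d hd h => rfun_uniq d hd h⟩
  rintro d ⟨hd, h⟩
  exact rfun_uniq d hd h

end
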